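/- arXiv:1912.00353 — 4 statements merged into one kernel-verified Lean document; each statement's English description precedes it below -/
import Mathlib

section
/- The q-Laguerre polynomials satisfy the contiguous relation (1+z)·L_n^{(δ)}(zq; q) = ((q^{n+1}-1)/q^{n+δ+1})·L_{n+1}^{(δ)}(z; q) + (1/q^{n+δ+1})·L_n^{(δ)}(z; q) for all z. -/
open MeasureTheory Finset

/-- Finite q-Pochhammer symbol `(a;q)_k = ∏_{j<k} (1 - a q^j)`. -/
noncomputable def qPoch (q a : ℝ) (k : ℕ) : ℝ := ∏ j ∈ Finset.range k, (1 - a * q ^ j)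

/-- Infinite q-Pochhammer symbol `(a;q)_∞ = ∏_{j≥0} (1 - a q^j)`. -/
noncomputable def qPochInf (q a : ℝ) : ℝ := ∏' k : ℕ, (1 - a * q ^ k)

/-- General basic hypergeometric series `ᵣφₛ` with numerator parameters `as`,
denominator parameters `bs`. -/
noncomputable def bhs (q : ℝ) (as bs : List ℝ) (z : ℝ) : ℝ :=
  ∑' k : ℕ,
    (as.map (fun a => qPoch q a k)).prod /
        (qPoch q q k * (bs.map (fun b => qPoch q b k)).prod) *
      ((-1 : ℝ) ^ k * q ^ (k * (k - 1) / 2)) ^ ((1 + (bs.length : ℤ)) - (as.length : ℤ)) *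
      z ^ k

/-- q-Laguerre polynomial `L_n^{(δ)}(z;q)` (terminating `₁φ₁` series). -/
noncomputable def qLaguerre (q δ : ℝ) (n : ℕ) (z : ℝ) : ℝ :=
  (qPoch q (q ^ (δ + 1)) n / qPoch q q n) *
    ∑ k ∈ Finset.range (n + 1),
      qPoch q (q ^ (-(n : ℝ))) k / (qPoch q q k * qPoch q (q ^ (δ + 1)) k) *
        ((-1 : ℝ) ^ k * q ^ (k * (k - 1) / 2)) * (-(q ^ ((n : ℝ) + δ + 1)) * z) ^ k

/-- Little q-Jacobi polynomial `p_n(z;a,b|q)` (terminating `₂φ₁` series). -/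
noncomputable def lqJacobi (q a b : ℝ) (n : ℕ) (z : ℝ) : ℝ :=
  ∑ k ∈ Finset.range (n + 1),
    qPoch q (q ^ (-(n : ℝ))) k * qPoch q (a * b * q ^ (n + 1)) k /
      (qPoch q q k * qPoch q (a * q) k) * (q * z) ^ k

/-- q-Meixner polynomial `M_n(x;b,c;q)` evaluated at `x = q^{-z}`. -/
noncomputable def qMeixner (q b c : ℝ) (n : ℕ) (x : ℝ) : ℝ :=
  ∑ k ∈ Finset.range (n + 1),
    qPoch q (q ^ (-(n : ℝ))) k * qPoch q x k / (qPoch q q k * qPoch q (b * q) k) *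
      (-(q ^ (n + 1)) / c) ^ k

/-- Al-Salam-Carlitz I polynomial `U_n^a(z;q)`. -/
noncomputable def alSalamCarlitzI (q a : ℝ) (n : ℕ) (z : ℝ) : ℝ :=
  (-a) ^ n * q ^ (n * (n - 1) / 2) *
    ∑ k ∈ Finset.range (n + 1),
      qPoch q (q ^ (-(n : ℝ))) k * qPoch q z⁻¹ k / (qPoch q q k * qPoch q 0 k) *
        (q * z / a) ^ k

/-- The `₂φ₂` polynomial `φ_n^{(k)}(z) = ₂φ₂(q^{-n}, q^{γ+k}; q^{δ+1}, q^{γ}; q, -q^{n+δ+1} z)`. -/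
noncomputable def phi2 (q δ γ : ℝ) (n k : ℕ) (z : ℝ) : ℝ :=
  ∑ j ∈ Finset.range (n + 1),
    qPoch q (q ^ (-(n : ℝ))) j * qPoch q (q ^ (γ + (k : ℝ))) j /
      (qPoch q q j * qPoch q (q ^ (δ + 1)) j * qPoch q (q ^ γ) j) *
      ((-1 : ℝ) ^ j * q ^ (j * (j - 1) / 2)) * (-(q ^ ((n : ℝ) + δ + 1)) * z) ^ j

/-- The `₃φ₂` polynomial `Φ_n^{(k)}(z) = ₃φ₂(q^{-n}, q^{γ+k}, abq^{n+1}; aq, q^{γ}; q, qz)`. -/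
noncomputable def Phi3 (q a b γ : ℝ) (n k : ℕ) (z : ℝ) : ℝ :=
  ∑ j ∈ Finset.range (n + 1),
    qPoch q (q ^ (-(n : ℝ))) j * qPoch q (q ^ (γ + (k : ℝ))) j *
        qPoch q (a * b * q ^ (n + 1)) j /
      (qPoch q q j * qPoch q (a * q) j * qPoch q (q ^ γ) j) * (q * z) ^ j

/-- The `₃φ₂` polynomial `φ_n^{(k)}` built on q-Meixner data, at `x = q^{-z}`:
`₃φ₂(q^{-n}, q^{γ+k}, q^{-z}; bq, q^{γ}; q, -q^{n+1}/c)`. -/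
noncomputable def phi3M (q b c γ : ℝ) (n k : ℕ) (x : ℝ) : ℝ :=
  ∑ j ∈ Finset.range (n + 1),
    qPoch q (q ^ (-(n : ℝ))) j * qPoch q (q ^ (γ + (k : ℝ))) j * qPoch q x j /
      (qPoch q q j * qPoch q (b * q) j * qPoch q (q ^ γ) j) * (-(q ^ (n + 1)) / c) ^ j

/-- The `₃φ₂` polynomial `ϕ_n^{(k)}(z) = ₃φ₂(q^{-n}, q^{γ+k}, z^{-1}; 0, q^{γ}; q, qz/a)`. -/
noncomputable def phi3AS (q a γ : ℝ) (n k : ℕ) (z : ℝ) : ℝ :=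
  ∑ j ∈ Finset.range (n + 1),
    qPoch q (q ^ (-(n : ℝ))) j * qPoch q (q ^ (γ + (k : ℝ))) j * qPoch q z⁻¹ j /
      (qPoch q q j * qPoch q 0 j * qPoch q (q ^ γ) j) * (q * z / a) ^ j

/-! Write `L_n^{(δ)}(z;q) = ∑ₖ c n k zᵏ` with `t = q^{δ+1}` (`qLaguerreCoeff`). These coefficients
are hypergeometric in both `n` and `k`: the ratios `c n (k+1) / c n k`, `c (n+1) (k+1) / c n k` and
`c (n+1) 0 / c n 0` are explicit rational functions of `q^n`, `q^k` and `t`. After expanding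
`(1 + z) ∑ₖ aₖ zᵏ` by an index shift, comparing the coefficients of `z^(k+1)` in the contiguous
relation reduces it to an identity between these rational functions. -/

lemma one_add_mul_sum_range_pow {R : Type*} [CommSemiring R] (a : ℕ → R) (N : ℕ) (z : R)
    (ha : a N = 0) :
    (1 + z) * ∑ k ∈ range (N + 1), a k * z ^ k =
      a 0 + ∑ k ∈ range N, (a (k + 1) + a k) * z ^ (k + 1) := by
  have hshift : ∑ k ∈ range (N + 1), a k * z ^ (k + 1) = ∑ k ∈ range N, a k * z ^ (k + 1) := by
    rw [sum_range_succ, ha, zero_mul, add_zero]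
  calc (1 + z) * ∑ k ∈ range (N + 1), a k * z ^ k
      = ∑ k ∈ range (N + 1), a k * z ^ k + ∑ k ∈ range (N + 1), a k * z ^ (k + 1) := by
        rw [add_mul, one_mul, mul_sum]
        exact congrArg _ (sum_congr rfl fun k _ => by ring)
    _ = a 0 + (∑ k ∈ range N, a (k + 1) * z ^ (k + 1) + ∑ k ∈ range N, a k * z ^ (k + 1)) := by
        rw [sum_range_succ', hshift, pow_zero, mul_one]
        ring
    _ = a 0 + ∑ k ∈ range N, (a (k + 1) + a k) * z ^ (k + 1) := by
        simp only [add_mul, sum_add_distrib]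

lemma Nat.succ_choose_two (k : ℕ) : (k + 1).choose 2 = k.choose 2 + k := by
  rw [Nat.choose_succ_succ, Nat.choose_one_right, add_comm]

lemma qPoch_zero (q a : ℝ) : qPoch q a 0 = 1 := prod_range_zero _

lemma qPoch_succ (q a : ℝ) (k : ℕ) : qPoch q a (k + 1) = qPoch q a k * (1 - a * q ^ k) :=
  prod_range_succ _ _

lemma qPoch_succ' (q a : ℝ) (k : ℕ) : qPoch q a (k + 1) = (1 - a) * qPoch q (a * q) k := by
  unfold qPoch
  rw [prod_range_succ', pow_zero, mul_one, mul_comm]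
  congr 1
  exact prod_congr rfl fun j _ => by ring

lemma one_sub_mul_pow_pos {q a : ℝ} (hq0 : 0 ≤ q) (hq1 : q ≤ 1) (ha : a < 1) (k : ℕ) :
    0 < 1 - a * q ^ k := by
  have := pow_le_one₀ hq0 hq1 (n := k)
  have := pow_nonneg hq0 k
  rcases le_total a 0 with h | h <;> nlinarith

noncomputable def qLaguerreCoeff (q t : ℝ) (n k : ℕ) : ℝ :=
  qPoch q t n / qPoch q q n *
    (qPoch q (q ^ n)⁻¹ k / (qPoch q q k * qPoch q t k) * q ^ k.choose 2 * (q ^ n * t) ^ k)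

lemma qLaguerre_eq_sum {q : ℝ} (hq : 0 < q) (δ : ℝ) (n : ℕ) (z : ℝ) :
    qLaguerre q δ n z = ∑ k ∈ range (n + 1), qLaguerreCoeff q (q ^ (δ + 1)) n k * z ^ k := by
  have hneg : q ^ (-(n : ℝ)) = (q ^ n)⁻¹ := by rw [Real.rpow_neg hq.le, Real.rpow_natCast]
  have hadd : q ^ ((n : ℝ) + δ + 1) = q ^ n * q ^ (δ + 1) := by
    rw [add_assoc, Real.rpow_add hq, Real.rpow_natCast]
  rw [qLaguerre, mul_sum]
  refine sum_congr rfl fun k _ => ?_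
  rw [hneg, hadd, ← Nat.choose_two_right, neg_mul, neg_pow, qLaguerreCoeff]
  have hsign : ((-1 : ℝ) ^ k) * (-1) ^ k = 1 := by rw [← mul_pow]; norm_num
  linear_combination (qPoch q (q ^ (δ + 1)) n / qPoch q q n *
    (qPoch q (q ^ n)⁻¹ k / (qPoch q q k * qPoch q (q ^ (δ + 1)) k)) * q ^ k.choose 2 *
      (q ^ n * q ^ (δ + 1) * z) ^ k) * hsign

section Coefficients

variable {q t : ℝ}

lemma qLaguerreCoeff_eq_zero_of_lt (hq : q ≠ 0) {n k : ℕ} (h : n < k) :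
    qLaguerreCoeff q t n k = 0 := by
  have hvanish : qPoch q (q ^ n)⁻¹ k = 0 :=
    prod_eq_zero (mem_range.2 h) (by rw [inv_mul_cancel₀ (pow_ne_zero n hq), sub_self])
  simp [qLaguerreCoeff, hvanish]

lemma qLaguerreCoeff_succ (hq0 : 0 < q) (hq1 : q < 1) (ht : t < 1) (n k : ℕ) :
    qLaguerreCoeff q t n (k + 1) = qLaguerreCoeff q t n k *
      ((1 - (q ^ n)⁻¹ * q ^ k) * q ^ k * (q ^ n * t) / ((1 - q ^ (k + 1)) * (1 - t * q ^ k))) := by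
  have hqk := (one_sub_mul_pow_pos hq0.le hq1.le hq1 k).ne'
  have htk := (one_sub_mul_pow_pos hq0.le hq1.le ht k).ne'
  rw [← pow_succ'] at hqk
  simp only [qLaguerreCoeff, qPoch_succ, ← pow_succ', Nat.succ_choose_two,
    pow_add q (Nat.choose _ 2)]
  field_simp
  ring

lemma qLaguerreCoeff_succ_succ (hq0 : 0 < q) (hq1 : q < 1) (ht : t < 1) (n k : ℕ) :
    qLaguerreCoeff q t (n + 1) (k + 1) = qLaguerreCoeff q t n k *
      (-(1 - t * q ^ n) * q ^ k * q ^ k * t / ((1 - q ^ (k + 1)) * (1 - t * q ^ k))) := by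
  have hinv : (q ^ (n + 1))⁻¹ * q = (q ^ n)⁻¹ := by
    rw [pow_succ, mul_inv, inv_mul_cancel_right₀ hq0.ne']
  rw [qLaguerreCoeff, qLaguerreCoeff, qPoch_succ' q (q ^ (n + 1))⁻¹, hinv]
  have hqk := (one_sub_mul_pow_pos hq0.le hq1.le hq1 k).ne'
  have hqn := (one_sub_mul_pow_pos hq0.le hq1.le hq1 n).ne'
  have htk := (one_sub_mul_pow_pos hq0.le hq1.le ht k).ne'
  rw [← pow_succ'] at hqk hqn
  simp only [qPoch_succ q _ k, qPoch_succ q _ n, ← pow_succ', Nat.succ_choose_two,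
    pow_add q (Nat.choose _ 2)]
  generalize qPoch q (q ^ n)⁻¹ k = P
  field_simp
  ring

lemma qLaguerreCoeff_succ_zero (hq0 : 0 < q) (hq1 : q < 1) (n : ℕ) :
    qLaguerreCoeff q t (n + 1) 0 =
      qLaguerreCoeff q t n 0 * ((1 - t * q ^ n) / (1 - q ^ (n + 1))) := by
  have hqn := (one_sub_mul_pow_pos hq0.le hq1.le hq1 n).ne'
  rw [← pow_succ'] at hqn
  simp only [qLaguerreCoeff, qPoch_succ, ← pow_succ', qPoch_zero]
  field_simp

lemma qLaguerreCoeff_contiguous_succ (hq0 : 0 < q) (hq1 : q < 1) (ht : t < 1) (n k : ℕ) :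
    (q ^ (n + 1) - 1) * qLaguerreCoeff q t (n + 1) (k + 1) + qLaguerreCoeff q t n (k + 1) =
      q ^ n * t * (qLaguerreCoeff q t n (k + 1) * q ^ (k + 1) + qLaguerreCoeff q t n k * q ^ k) := by
  have hqk := (one_sub_mul_pow_pos hq0.le hq1.le hq1 k).ne'
  have htk := (one_sub_mul_pow_pos hq0.le hq1.le ht k).ne'
  rw [← pow_succ'] at hqk
  rw [qLaguerreCoeff_succ_succ hq0 hq1 ht, qLaguerreCoeff_succ hq0 hq1 ht]
  field_simp
  ring

lemma qLaguerreCoeff_contiguous_zero (hq0 : 0 < q) (hq1 : q < 1) (n : ℕ) :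
    (q ^ (n + 1) - 1) * qLaguerreCoeff q t (n + 1) 0 + qLaguerreCoeff q t n 0 =
      q ^ n * t * qLaguerreCoeff q t n 0 := by
  have hqn := (one_sub_mul_pow_pos hq0.le hq1.le hq1 n).ne'
  rw [← pow_succ'] at hqn
  rw [qLaguerreCoeff_succ_zero hq0 hq1]
  field_simp
  ring

lemma qLaguerreCoeff_sum_contiguous (hq0 : 0 < q) (hq1 : q < 1) (ht : t < 1)
    (n : ℕ) (z : ℝ) :
    q ^ n * t * ((1 + z) * ∑ k ∈ range (n + 1), qLaguerreCoeff q t n k * (z * q) ^ k) =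
      (q ^ (n + 1) - 1) * ∑ k ∈ range (n + 2), qLaguerreCoeff q t (n + 1) k * z ^ k +
        ∑ k ∈ range (n + 1), qLaguerreCoeff q t n k * z ^ k := by
  have hextend : ∀ w : ℝ, ∑ k ∈ range (n + 1), qLaguerreCoeff q t n k * w ^ k =
      ∑ k ∈ range (n + 2), qLaguerreCoeff q t n k * w ^ k := fun w => by
    rw [sum_range_succ _ (n + 1), qLaguerreCoeff_eq_zero_of_lt hq0.ne' n.lt_succ_self, zero_mul,
      add_zero]
  have htop : qLaguerreCoeff q t n (n + 1) * q ^ (n + 1) = 0 := by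
    rw [qLaguerreCoeff_eq_zero_of_lt hq0.ne' n.lt_succ_self, zero_mul]
  calc q ^ n * t * ((1 + z) * ∑ k ∈ range (n + 1), qLaguerreCoeff q t n k * (z * q) ^ k)
      = q ^ n * t * ((1 + z) * ∑ k ∈ range (n + 2), qLaguerreCoeff q t n k * q ^ k * z ^ k) := by
        rw [hextend]
        congr 2
        exact sum_congr rfl fun k _ => by ring
    _ = q ^ n * t * (qLaguerreCoeff q t n 0 + ∑ k ∈ range (n + 1),
          (qLaguerreCoeff q t n (k + 1) * q ^ (k + 1) + qLaguerreCoeff q t n k * q ^ k) *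
            z ^ (k + 1)) := by
        rw [one_add_mul_sum_range_pow (fun k => qLaguerreCoeff q t n k * q ^ k) _ _ htop,
          pow_zero, mul_one]
    _ = ∑ k ∈ range (n + 2),
          ((q ^ (n + 1) - 1) * qLaguerreCoeff q t (n + 1) k + qLaguerreCoeff q t n k) * z ^ k := by
        rw [sum_range_succ' _ (n + 1), mul_add, mul_sum, pow_zero, mul_one,
          qLaguerreCoeff_contiguous_zero hq0 hq1, add_comm]
        simp only [qLaguerreCoeff_contiguous_succ hq0 hq1 ht, mul_assoc]
    _ = _ := by
        rw [hextend, mul_sum, ← sum_add_distrib]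
        exact sum_congr rfl fun k _ => by ring

end Coefficients

/-- `(1+z) L_n^{(δ)}(zq;q) = ((q^{n+1}-1)/q^{n+δ+1}) L_{n+1}^{(δ)}(z;q)
+ (1/q^{n+δ+1}) L_n^{(δ)}(z;q)`. -/
theorem stmt2 (q δ : ℝ) (hq0 : 0 < q) (hq1 : q < 1) (hδ : -1 < δ) (n : ℕ) (z : ℝ) :
    (1 + z) * qLaguerre q δ n (z * q) =
      (q ^ ((n : ℝ) + 1) - 1) / q ^ ((n : ℝ) + δ + 1) * qLaguerre q δ (n + 1) z +
        1 / q ^ ((n : ℝ) + δ + 1) * qLaguerre q δ n z := by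
  have ht : q ^ (δ + 1) < 1 := Real.rpow_lt_one hq0.le hq1 (by linarith)
  have hsplit : q ^ ((n : ℝ) + δ + 1) = q ^ n * q ^ (δ + 1) := by
    rw [add_assoc, Real.rpow_add hq0, Real.rpow_natCast]
  have hsucc : q ^ ((n : ℝ) + 1) = q ^ (n + 1) := by
    exact_mod_cast Real.rpow_natCast q (n + 1)
  have hpos : 0 < q ^ n * q ^ (δ + 1) := by positivity
  rw [hsplit, hsucc, div_mul_eq_mul_div, one_div_mul_eq_div, ← add_div,
    eq_div_iff hpos.ne', mul_comm, qLaguerre_eq_sum hq0, qLaguerre_eq_sum hq0,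
    qLaguerre_eq_sum hq0]
  exact qLaguerreCoeff_sum_contiguous hq0 hq1 ht n z
end

section
/- The little q-Jacobi polynomials satisfy p_n(z; a, b | q) = ((1-abq^{n+1})/(1-abq^{2n+1}))·p_n(z; a, bq | q) + (abq^{n+1}(1-q^n)/(1-abq^{2n+1}))·p_{n-1}(z; a, bq | q) for all z and n ≥ 1. -/
open MeasureTheory Finset

/-!
Termwise, the identity is the contiguous relation
`(u - c) (u;q)_k (c;q)_k = u (1 - c) (u;q)_k (cq;q)_k - c (1 - u) (uq;q)_k (c;q)_k`
with `u = q^{-n}` and `c = abq^{n+1}`, which follows from `(x;q)_k (1 - xq^k) = (1 - x)(xq;q)_k`.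
The series of `p_{n-1}` may be summed up to `k = n` like the others, because `(q^{1-n};q)_n = 0`.
-/

lemma qPoch_mul_one_sub (q x : ℝ) (k : ℕ) :
    qPoch q x k * (1 - x * q ^ k) = (1 - x) * qPoch q (x * q) k := by
  unfold qPoch
  rw [← prod_range_succ (fun j => 1 - x * q ^ j), prod_range_succ', mul_comm]
  simp only [pow_zero, mul_one, pow_succ, mul_assoc, mul_comm q]

lemma qPoch_contiguous (q u c : ℝ) (k : ℕ) :
    (u - c) * (qPoch q u k * qPoch q c k) =
      u * (1 - c) * (qPoch q u k * qPoch q (c * q) k) -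
        c * (1 - u) * (qPoch q (u * q) k * qPoch q c k) := by
  linear_combination u * qPoch q u k * qPoch_mul_one_sub q c k -
    c * qPoch q c k * qPoch_mul_one_sub q u k

lemma qPoch_mul_qPoch_eq_of_mul_pow_eq_one {q u c : ℝ} {N : ℕ} (hu : u * q ^ N = 1)
    (hD : 1 - c * q ^ N ≠ 0) (k : ℕ) :
    qPoch q u k * qPoch q c k =
      (1 - c) / (1 - c * q ^ N) * (qPoch q u k * qPoch q (c * q) k) +
        c * (1 - q ^ N) / (1 - c * q ^ N) * (qPoch q (u * q) k * qPoch q c k) := by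
  rw [div_mul_eq_mul_div, div_mul_eq_mul_div, ← add_div, eq_div_iff hD]
  linear_combination q ^ N * qPoch_contiguous q u c k +
    ((1 - c) * qPoch q u k * qPoch q (c * q) k + c * qPoch q (u * q) k * qPoch q c k -
      qPoch q u k * qPoch q c k) * hu

lemma qPoch_rpow_neg_natCast_eq_zero {q : ℝ} (hq : q ≠ 0) {m k : ℕ} (hmk : m < k) :
    qPoch q (q ^ (-(m : ℝ))) k = 0 :=
  prod_eq_zero (mem_range.mpr hmk) (by simp [Real.rpow_neg_natCast, hq])

lemma lqJacobi_eq_sum_range_of_le {q : ℝ} (hq : q ≠ 0) (a b : ℝ) {n N : ℕ} (hnN : n ≤ N)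
    (z : ℝ) :
    lqJacobi q a b n z =
      ∑ k ∈ range (N + 1), qPoch q (q ^ (-(n : ℝ))) k * qPoch q (a * b * q ^ (n + 1)) k /
        (qPoch q q k * qPoch q (a * q) k) * (q * z) ^ k := by
  refine sum_subset (range_subset_range.mpr (by omega)) fun k _ hk => ?_
  rw [qPoch_rpow_neg_natCast_eq_zero hq (by simpa using hk)]
  simp

theorem stmt6_general (q a b : ℝ) (hq0 : 0 < q) (n : ℕ) (hn : 1 ≤ n) (h : a * b * q ^ (2 * n + 1) ≠ 1)
    (z : ℝ) :
    lqJacobi q a b n z =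
      (1 - a * b * q ^ (n + 1)) / (1 - a * b * q ^ (2 * n + 1)) * lqJacobi q a (b * q) n z +
        a * b * q ^ (n + 1) * (1 - q ^ n) / (1 - a * b * q ^ (2 * n + 1)) *
          lqJacobi q a (b * q) (n - 1) z := by
  obtain ⟨m, rfl⟩ := Nat.exists_eq_add_of_le' hn
  have hq : q ≠ 0 := hq0.ne'
  have hu : q ^ (-((m + 1 : ℕ) : ℝ)) * q ^ (m + 1) = 1 := by
    rw [Real.rpow_neg_natCast, zpow_neg, zpow_natCast, inv_mul_cancel₀ (pow_ne_zero _ hq)]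
  have huq : q ^ (-(m : ℝ)) = q ^ (-((m + 1 : ℕ) : ℝ)) * q := by
    rw [Real.rpow_neg_natCast, Real.rpow_neg_natCast, zpow_neg, zpow_neg, zpow_natCast,
      zpow_natCast, pow_succ, mul_inv, inv_mul_cancel_right₀ hq]
  set c : ℝ := a * b * q ^ (m + 1 + 1)
  have hD : 1 - c * q ^ (m + 1) ≠ 0 := by
    refine sub_ne_zero.mpr (Ne.symm ?_)
    convert h using 1
    ring
  rw [Nat.add_sub_cancel, lqJacobi_eq_sum_range_of_le hq a (b * q) (Nat.le_succ m)]
  unfold lqJacobi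
  rw [mul_sum, mul_sum, ← sum_add_distrib]
  refine sum_congr rfl fun k _ => ?_
  rw [show a * (b * q) * q ^ (m + 1 + 1) = c * q by ring,
    show a * (b * q) * q ^ (m + 1) = c by ring, huq, qPoch_mul_qPoch_eq_of_mul_pow_eq_one hu hD k]
  ring

/-- `p_n(z;a,b|q) = ((1-abq^{n+1})/(1-abq^{2n+1})) p_n(z;a,bq|q)
+ (abq^{n+1}(1-q^n)/(1-abq^{2n+1})) p_{n-1}(z;a,bq|q)` for `n ≥ 1`. -/
theorem stmt6 (q a b : ℝ) (hq0 : 0 < q) (hq1 : q < 1) (ha0 : 0 < a * q) (ha1 : a * q < 1)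
    (hb : b * q < 1) (n : ℕ) (hn : 1 ≤ n) (h : a * b * q ^ (2 * n + 1) ≠ 1) (z : ℝ) :
    lqJacobi q a b n z =
      (1 - a * b * q ^ (n + 1)) / (1 - a * b * q ^ (2 * n + 1)) * lqJacobi q a (b * q) n z +
        a * b * q ^ (n + 1) * (1 - q ^ n) / (1 - a * b * q ^ (2 * n + 1)) *
          lqJacobi q a (b * q) (n - 1) z :=
  stmt6_general q a b hq0 n hn h z
end

section
/- The q-Meixner polynomials satisfy the contiguous relation (bc + q^{-z})·M_n(q^{-z}; b, c/q; q) = (c(bq^{n+1}-1)/q^{n+1})·M_{n+1}(q^{-z}; b, c; q) + ((q^{n+1}+c)/q^{n+1})·M_n(q^{-z}; b, c; q) for all z. -/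
open MeasureTheory Finset

lemma qPoch_pos {q a : ℝ} (hq0 : 0 ≤ q) (hq1 : q ≤ 1) (ha : a < 1) (k : ℕ) :
    0 < qPoch q a k :=
  prod_pos fun j _ => by
    have hqj := pow_le_one₀ hq0 hq1 (n := j)
    rcases le_or_gt 0 a with h | h
    · nlinarith
    · nlinarith [pow_nonneg hq0 j]

lemma qPoch_rpow_neg_natCast_self_succ {q : ℝ} (hq : 0 < q) (n : ℕ) :
    qPoch q (q ^ (-(n : ℝ))) (n + 1) = 0 := by
  refine prod_eq_zero (self_mem_range_succ n) ?_
  rw [Real.rpow_neg hq.le, Real.rpow_natCast, inv_mul_cancel₀ (pow_ne_zero n hq.ne'), sub_self]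

noncomputable def qMeixnerTerm (q b x a w : ℝ) (k : ℕ) : ℝ :=
  qPoch q a k * qPoch q x k / (qPoch q q k * qPoch q (b * q) k) * w ^ k

lemma qMeixner_eq_sum_qMeixnerTerm {q : ℝ} (hq : 0 < q) (b c : ℝ) (n : ℕ) (x : ℝ) :
    qMeixner q b c n x =
      ∑ k ∈ range (n + 2), qMeixnerTerm q b x (q ^ (-(n : ℝ))) (-(q ^ (n + 1)) / c) k := by
  rw [sum_range_succ, qMeixnerTerm, qPoch_rpow_neg_natCast_self_succ hq, zero_mul, zero_div,
    zero_mul, add_zero]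
  rfl

noncomputable def qMeixnerTelescope (q b x a u : ℝ) : ℕ → ℝ
  | 0 => 0
  | k + 1 => a * u ^ (k + 1) * qPoch q a k * qPoch q x (k + 1) / (qPoch q q k * qPoch q (b * q) k)

lemma qMeixnerTerm_contiguous {q : ℝ} (hq : q ≠ 0) (b x a u : ℝ) (k : ℕ)
    (hQ : qPoch q q k ≠ 0) (hB : qPoch q (b * q) k ≠ 0) :
    (a * u * x - b * q) * qMeixnerTerm q b x a (q * u) k
        - (a - b * q) * qMeixnerTerm q b x (a / q) (q * u) k
        - a * (u - 1) * qMeixnerTerm q b x a u k =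
      qMeixnerTelescope q b x a u k - qMeixnerTelescope q b x a u (k + 1) := by
  cases k with
  | zero =>
    simp only [qMeixnerTerm, qMeixnerTelescope, qPoch, range_zero, prod_empty, zero_add,
      prod_range_one]
    ring
  | succ j =>
    rw [qPoch_succ] at hQ hB
    obtain ⟨hQj, hQ'⟩ := mul_ne_zero_iff.mp hQ
    obtain ⟨hBj, hB'⟩ := mul_ne_zero_iff.mp hB
    simp only [qMeixnerTerm, qMeixnerTelescope, qPoch_succ' q (a / q), div_mul_cancel₀ a hq,
      qPoch_succ q _ (j + 1), qPoch_succ q _ j]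
    field_simp
    ring

lemma sum_qMeixnerTerm_contiguous {q : ℝ} (hq : q ≠ 0) (b x a u : ℝ) (N : ℕ)
    (hQ : ∀ k, qPoch q q k ≠ 0) (hB : ∀ k, qPoch q (b * q) k ≠ 0)
    (ha : qPoch q a (N + 1) = 0) :
    (a * u * x - b * q) * ∑ k ∈ range (N + 2), qMeixnerTerm q b x a (q * u) k =
      (a - b * q) * ∑ k ∈ range (N + 2), qMeixnerTerm q b x (a / q) (q * u) k
        + a * (u - 1) * ∑ k ∈ range (N + 2), qMeixnerTerm q b x a u k := by
  rw [← sub_eq_zero, ← sub_sub, mul_sum, mul_sum, mul_sum, ← sum_sub_distrib,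
    ← sum_sub_distrib, sum_congr rfl fun k _ => qMeixnerTerm_contiguous hq b x a u k (hQ _) (hB _),
    sum_range_sub', qMeixnerTelescope, qMeixnerTelescope, ha]
  simp

lemma qMeixner_contiguous_scaled {q : ℝ} (hq0 : 0 < q) (hq1 : q < 1) {b : ℝ} (hb1 : b * q < 1)
    {c : ℝ} (hc : c ≠ 0) (n : ℕ) (x : ℝ) :
    ((q ^ n)⁻¹ * (-(q ^ (n + 1)) / c) * x - b * q) * qMeixner q b (c / q) n x =
      ((q ^ n)⁻¹ - b * q) * qMeixner q b c (n + 1) x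
        + (q ^ n)⁻¹ * (-(q ^ (n + 1)) / c - 1) * qMeixner q b c n x := by
  have hA : q ^ (-(n : ℝ)) = (q ^ n)⁻¹ := by rw [Real.rpow_neg hq0.le, Real.rpow_natCast]
  have hA' : q ^ (-((n + 1 : ℕ) : ℝ)) = (q ^ n)⁻¹ / q := by
    rw [Real.rpow_neg hq0.le, Real.rpow_natCast, pow_succ, mul_inv, div_eq_mul_inv]
  obtain ⟨u, hu⟩ : ∃ u, -(q ^ (n + 1)) / c = u := ⟨_, rfl⟩
  have hw : -(q ^ (n + 1)) / (c / q) = q * u := by rw [← hu]; field_simp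
  have hw' : -(q ^ (n + 1 + 1)) / c = q * u := by rw [← hu, pow_succ _ (n + 1)]; ring
  have hM₁ : qMeixner q b c (n + 1) x =
      ∑ k ∈ range (n + 2), qMeixnerTerm q b x ((q ^ n)⁻¹ / q) (q * u) k := by
    rw [← hA', ← hw']
    rfl
  rw [hM₁, qMeixner_eq_sum_qMeixnerTerm hq0, qMeixner_eq_sum_qMeixnerTerm hq0, hA, hw, hu]
  exact sum_qMeixnerTerm_contiguous hq0.ne' b x (q ^ n)⁻¹ u n
    (fun k => (qPoch_pos hq0.le hq1.le hq1 k).ne') (fun k => (qPoch_pos hq0.le hq1.le hb1 k).ne')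
    (hA ▸ qPoch_rpow_neg_natCast_self_succ hq0 n)

theorem stmt7_general (q b c : ℝ) (hq0 : 0 < q) (hq1 : q < 1) (hb1 : b * q < 1)
    (hc : 0 < c) (n : ℕ) (z : ℝ) :
    (b * c + q ^ (-z)) * qMeixner q b (c / q) n (q ^ (-z)) =
      c * (b * q ^ (n + 1) - 1) / q ^ (n + 1) * qMeixner q b c (n + 1) (q ^ (-z)) +
        (q ^ (n + 1) + c) / q ^ (n + 1) * qMeixner q b c n (q ^ (-z)) := by
  have key := qMeixner_contiguous_scaled hq0 hq1 hb1 hc.ne' n (q ^ (-z))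
  field_simp at key ⊢
  linear_combination -key

/-- contiguous relation for q-Meixner polynomials:
`(bc + q^{-z}) M_n(q^{-z};b,c/q;q) = (c(bq^{n+1}-1)/q^{n+1}) M_{n+1}(q^{-z};b,c;q)
+ ((q^{n+1}+c)/q^{n+1}) M_n(q^{-z};b,c;q)`. -/
theorem stmt7 (q b c : ℝ) (hq0 : 0 < q) (hq1 : q < 1) (hb0 : 0 < b * q) (hb1 : b * q < 1)
    (hc : 0 < c) (n : ℕ) (z : ℝ) :
    (b * c + q ^ (-z)) * qMeixner q b (c / q) n (q ^ (-z)) =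
      c * (b * q ^ (n + 1) - 1) / q ^ (n + 1) * qMeixner q b c (n + 1) (q ^ (-z)) +
        (q ^ (n + 1) + c) / q ^ (n + 1) * qMeixner q b c n (q ^ (-z)) :=
  stmt7_general q b c hq0 hq1 hb1 hc n z
end

section
/- For r = s, the twice-iterated contiguous relation holds: (q^{-2n}(1-q^{α})(1-q^{α+1})/((q^{-n}-q^{α})(q^{-n}-q^{α+1}))) · _rφ_s(q^{-n}, q^{α+2}, α_3,...; β_1,...; q, z) = _rφ_s(q^{-n}, q^{α}, ...; q, z) + (q^{α}(1+q)(1-q^{-n})/(q^{-n}-q^{α+1})) · _rφ_s(q^{-n+1}, q^{α}, ...; q, z) + (q^{2α}(1-q^{-n})(1-q^{-n+1})/((q^{-n}-q^{α})(q^{-n}-q^{α+1}))) · _rφ_s(q^{-n+2}, q^{α}, ...; q, z). -/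
open MeasureTheory Finset

lemma qPoch_zero_left (q : ℝ) (k : ℕ) : qPoch q 0 k = 1 := by
  simp [qPoch]

lemma qPoch_eq_zero_of_lt {q a : ℝ} {m k : ℕ} (h : a * q ^ m = 1) (hk : m < k) :
    qPoch q a k = 0 :=
  prod_eq_zero (mem_range.mpr hk) (by rw [h, sub_self])

lemma one_sub_mul_qPoch_mul (q a : ℝ) (k : ℕ) :
    (1 - a) * qPoch q (a * q) k = (1 - a * q ^ k) * qPoch q a k := by
  induction k with
  | zero => simp [qPoch]
  | succ k ih =>
    rw [qPoch_succ, qPoch_succ]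
    linear_combination (1 - a * q * q ^ k) * ih

lemma one_sub_mul_one_sub_mul_qPoch_mul_sq (q a : ℝ) (k : ℕ) :
    (1 - a) * (1 - a * q) * qPoch q (a * q ^ 2) k =
      (1 - a * q ^ k) * (1 - a * q * q ^ k) * qPoch q a k := by
  have h := one_sub_mul_qPoch_mul q (a * q) k
  rw [mul_assoc a q q, ← sq] at h
  linear_combination (1 - a) * h + (1 - a * q * q ^ k) * one_sub_mul_qPoch_mul q a k

lemma qPoch_contiguous_twice (q a N : ℝ) (k : ℕ) (hNa : N ≠ a) (hNaq : N ≠ a * q) :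
    N ^ 2 * (1 - a) * (1 - a * q) / ((N - a) * (N - a * q)) *
        (qPoch q N k * qPoch q (a * q ^ 2) k) =
      qPoch q N k * qPoch q a k +
        a * (1 + q) * (1 - N) / (N - a * q) * (qPoch q (N * q) k * qPoch q a k) +
        a ^ 2 * (1 - N) * (1 - N * q) / ((N - a) * (N - a * q)) *
          (qPoch q (N * q ^ 2) k * qPoch q a k) := by
  have hNa' : N - a ≠ 0 := sub_ne_zero.mpr hNa
  have hNaq' : N - a * q ≠ 0 := sub_ne_zero.mpr hNaq
  have Sa := one_sub_mul_one_sub_mul_qPoch_mul_sq q a k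
  have S1 := one_sub_mul_qPoch_mul q N k
  have S2 := one_sub_mul_qPoch_mul q (N * q) k
  rw [mul_assoc N q q, ← sq] at S2
  field_simp
  linear_combination (N ^ 2 * qPoch q N k) * Sa
    - (a * (1 + q) * (N - a) * qPoch q a k + a ^ 2 * (1 - N * q * q ^ k) * qPoch q a k) * S1
    - (a ^ 2 * (1 - N) * qPoch q a k) * S2

lemma summable_qPoch_mul_mul {q a : ℝ} {m : ℕ} (h : a * q ^ m = 1) (f g : ℕ → ℝ) :
    Summable fun k => qPoch q a k * f k * g k :=
  summable_of_ne_finset_zero (s := range (m + 1)) fun k hk => by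
    rw [qPoch_eq_zero_of_lt h (by simpa using hk), zero_mul, zero_mul]

noncomputable def bhsTerm (q : ℝ) (as bs : List ℝ) (z : ℝ) (k : ℕ) : ℝ :=
  (as.map (fun a => qPoch q a k)).prod / (qPoch q q k * (bs.map (fun b => qPoch q b k)).prod) *
    ((-1 : ℝ) ^ k * q ^ (k * (k - 1) / 2)) ^ ((1 + (bs.length : ℤ)) - (as.length : ℤ)) * z ^ k

lemma bhs_cons_cons (q a b : ℝ) (as bs : List ℝ) (z : ℝ) :
    bhs q (a :: b :: as) bs z =
      ∑' k, qPoch q a k * qPoch q b k * bhsTerm q (0 :: 0 :: as) bs z k := by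
  refine tsum_congr fun k => ?_
  simp only [bhsTerm, List.map_cons, List.prod_cons, List.length_cons, qPoch_zero_left]
  ring

theorem stmt17_general (q α : ℝ) (hq0 : 0 < q) (n : ℕ) (hn : 2 ≤ n)
    (h1 : q ^ (-(n : ℝ)) ≠ q ^ α) (h2 : q ^ (-(n : ℝ)) ≠ q ^ (α + 1))
    (as3 bs : List ℝ) (z : ℝ) :
    q ^ (-2 * (n : ℝ)) * (1 - q ^ α) * (1 - q ^ (α + 1)) /
        ((q ^ (-(n : ℝ)) - q ^ α) * (q ^ (-(n : ℝ)) - q ^ (α + 1))) *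
        bhs q (q ^ (-(n : ℝ)) :: q ^ (α + 2) :: as3) bs z =
      bhs q (q ^ (-(n : ℝ)) :: q ^ α :: as3) bs z +
        q ^ α * (1 + q) * (1 - q ^ (-(n : ℝ))) / (q ^ (-(n : ℝ)) - q ^ (α + 1)) *
          bhs q (q ^ (-(n : ℝ) + 1) :: q ^ α :: as3) bs z +
        q ^ (2 * α) * (1 - q ^ (-(n : ℝ))) * (1 - q ^ (-(n : ℝ) + 1)) /
            ((q ^ (-(n : ℝ)) - q ^ α) * (q ^ (-(n : ℝ)) - q ^ (α + 1))) *
          bhs q (q ^ (-(n : ℝ) + 2) :: q ^ α :: as3) bs z := by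
  have rpow_add_one (x : ℝ) : q ^ (x + 1) = q ^ x * q := by rw [Real.rpow_add hq0, Real.rpow_one]
  have rpow_add_two (x : ℝ) : q ^ (x + 2) = q ^ x * q ^ 2 := by
    rw [Real.rpow_add hq0, Real.rpow_two]
  have rpow_two_mul (x : ℝ) : q ^ (2 * x) = (q ^ x) ^ 2 := by
    rw [mul_comm, Real.rpow_mul hq0.le, Real.rpow_two]
  rw [rpow_add_one] at h2
  rw [neg_mul, ← mul_neg, rpow_two_mul, rpow_two_mul, rpow_add_one, rpow_add_one, rpow_add_two,
    rpow_add_two]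
  set N := q ^ (-(n : ℝ))
  have hN : ∀ j ≤ n, N * q ^ j * q ^ (n - j) = 1 := fun j hj => by
    rw [mul_assoc, ← pow_add, Nat.add_sub_cancel' hj, ← Real.rpow_natCast,
      ← Real.rpow_add hq0, neg_add_cancel, Real.rpow_zero]
  have summable_term (a : ℝ) {m : ℕ} (h : a * q ^ m = 1) :=
    summable_qPoch_mul_mul h (qPoch q (q ^ α)) (bhsTerm q (0 :: 0 :: as3) bs z)
  have s0 := summable_term N (by simpa using hN 0 (by omega))
  have s1 := summable_term (N * q) (by simpa using hN 1 (by omega))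
  have s2 := summable_term (N * q ^ 2) (hN 2 hn)
  simp only [bhs_cons_cons, ← tsum_mul_left]
  rw [← Summable.tsum_add s0 (s1.mul_left _), ← Summable.tsum_add (s0.add (s1.mul_left _))
    (s2.mul_left _)]
  refine tsum_congr fun k => ?_
  linear_combination bhsTerm q (0 :: 0 :: as3) bs z k * qPoch_contiguous_twice q (q ^ α) N k h1 h2

/-- twice-iterated contiguous relation for `ᵣφₛ` with `r = s`. -/
theorem stmt17 (q α : ℝ) (hq0 : 0 < q) (hq1 : q < 1) (n : ℕ) (hn : 2 ≤ n)
    (h1 : q ^ (-(n : ℝ)) ≠ q ^ α) (h2 : q ^ (-(n : ℝ)) ≠ q ^ (α + 1))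
    (h3 : q ^ α ≠ 1) (h4 : q ^ (α + 1) ≠ 1) (as3 bs : List ℝ)
    (hlen : bs.length = as3.length + 2) (z : ℝ) :
    q ^ (-2 * (n : ℝ)) * (1 - q ^ α) * (1 - q ^ (α + 1)) /
        ((q ^ (-(n : ℝ)) - q ^ α) * (q ^ (-(n : ℝ)) - q ^ (α + 1))) *
        bhs q (q ^ (-(n : ℝ)) :: q ^ (α + 2) :: as3) bs z =
      bhs q (q ^ (-(n : ℝ)) :: q ^ α :: as3) bs z +
        q ^ α * (1 + q) * (1 - q ^ (-(n : ℝ))) / (q ^ (-(n : ℝ)) - q ^ (α + 1)) *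
          bhs q (q ^ (-(n : ℝ) + 1) :: q ^ α :: as3) bs z +
        q ^ (2 * α) * (1 - q ^ (-(n : ℝ))) * (1 - q ^ (-(n : ℝ) + 1)) /
            ((q ^ (-(n : ℝ)) - q ^ α) * (q ^ (-(n : ℝ)) - q ^ (α + 1))) *
          bhs q (q ^ (-(n : ℝ) + 2) :: q ^ α :: as3) bs z :=
  stmt17_general q α hq0 n hn h1 h2 as3 bs z
end
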